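/- Let n, r be naturals with 1 ≤ r < n, for i = 1,…,n let F_i : ℝ^p → ℝ be twice continuously differentiable with μ‖v‖² ≤ ⟨v, ∇²F_i(x) v⟩ ≤ L‖v‖² for all x, v (0 < μ ≤ L) and with x ↦ ∇²F_i(x) c₀-Lipschitz in operator norm; set F = (1/n)Σ F_i. Let R ⊆ {1,…,n}, |R| = r, let 0 < η ≤ 2/(L+μ), and let M₁ > 0. Fix w, u, v ∈ ℝ^p with ‖u − w‖ ≤ M₁·r/n, and let B be a p×p symmetric matrix with ‖B − H̄‖ ≤ ξ, where H̄ = ∫₀¹ ∇²F(w + x(v − w)) dx. Define u' = u − (η/(n−r)) Σ_{i∉R} ∇F_i(u) and v' = v − (η/(n−r))·[ n·(B(v − w) + ∇F(w)) − Σ_{i∈R} ∇F_i(v) ]. Then ‖v' − u'‖ ≤ (1 − ημ + (nη/(n−r))·ξ + c₀M₁rη/(2n)) · ‖v − u‖ + (M₁ r η/(n−r)) · ξ. -/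

import Mathlib

open scoped RealInnerProductSpace
open InnerProductSpace intervalIntegral

section aux
variable {E : Type*} [NormedAddCommGroup E] [InnerProductSpace ℝ E] [CompleteSpace E]

private lemma grad_contDiff' {f : E → ℝ} (hf : ContDiff ℝ 2 f) : ContDiff ℝ 1 (gradient f) := by
  have h1 : gradient f = fun x => (toDual ℝ E).symm (fderiv ℝ f x) := rfl
  rw [h1]
  exact ((toDual ℝ E).symm.toContinuousLinearEquiv.symm.symm.contDiff).comp
    (hf.fderiv_right (by norm_num))

private lemma hess_inner' {f : E → ℝ} (x a b : E) :
    ⟪fderiv ℝ (gradient f) x a, b⟫ = fderiv ℝ (fderiv ℝ f) x a b := by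
  have h1 : gradient f = ((toDual ℝ E).symm : StrongDual ℝ E ≃ₗᵢ[ℝ] E) ∘ fderiv ℝ f := rfl
  rw [h1, LinearIsometryEquiv.comp_fderiv]
  exact toDual_symm_apply

private lemma hess_symm' {f : E → ℝ} (hf : ContDiff ℝ 2 f) (x a b : E) :
    ⟪fderiv ℝ (gradient f) x a, b⟫ = ⟪a, fderiv ℝ (gradient f) x b⟫ := by
  rw [hess_inner', real_inner_comm, hess_inner']
  exact (hf.contDiffAt.isSymmSndFDerivAt (by norm_num)) a b

private lemma hess_cont' {f : E → ℝ} (hf : ContDiff ℝ 2 f) :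
    Continuous (fderiv ℝ (gradient f)) :=
  (grad_contDiff' hf).continuous_fderiv one_ne_zero

private lemma grad_ftc' {f : E → ℝ} (hf : ContDiff ℝ 2 f) (a b : E) :
    gradient f b - gradient f a
      = (∫ t in (0:ℝ)..1, fderiv ℝ (gradient f) (a + t • (b - a))) (b - a) := by
  set H : ℝ → E →L[ℝ] E := fun t => fderiv ℝ (gradient f) (a + t • (b - a)) with hH
  have hcont : Continuous H := (hess_cont' hf).comp
    (continuous_const.add (continuous_id.smul continuous_const))
  have hint : IntervalIntegrable H MeasureTheory.volume 0 1 :=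
    hcont.intervalIntegrable 0 1
  rw [ContinuousLinearMap.intervalIntegral_apply hint]
  have hderiv : ∀ t ∈ Set.uIcc (0:ℝ) 1,
      HasDerivAt (fun t => gradient f (a + t • (b - a))) (H t (b - a)) t := by
    intro t _
    have hline : HasDerivAt (fun t : ℝ => a + t • (b - a)) (b - a) t := by
      simpa using ((hasDerivAt_id t).smul_const (b - a)).const_add a
    have hg : HasFDerivAt (gradient f) (H t) (a + t • (b - a)) :=
      (((grad_contDiff' hf).differentiable one_ne_zero) _).hasFDerivAt
    exact hg.comp_hasDerivAt t hline
  have := intervalIntegral.integral_eq_sub_of_hasDerivAt hderiv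
    ((hcont.clm_apply continuous_const).intervalIntegrable 0 1)
  rw [this]
  norm_num

private lemma symm_contraction' (T : E →L[ℝ] E) (a : ℝ)
    (hsymm : ∀ x y : E, ⟪T x, y⟫ = ⟪x, T y⟫)
    (hq : ∀ x : E, |⟪x, T x⟫| ≤ a * ‖x‖ ^ 2) (x : E) : ‖T x‖ ≤ a * ‖x‖ := by
  rcases eq_or_ne x 0 with rfl | hx0
  · simp
  have hxn : 0 < ‖x‖ := norm_pos_iff.2 hx0
  have ha : 0 ≤ a := by nlinarith [hq x, abs_nonneg ⟪x, T x⟫, pow_pos hxn 2]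
  rcases eq_or_ne (T x) 0 with h0 | h0
  · simp [h0]; positivity
  have hTx : 0 < ‖T x‖ := norm_pos_iff.2 h0
  set y : E := (‖x‖ / ‖T x‖) • T x with hy
  have hyn : ‖y‖ = ‖x‖ := by
    rw [hy, norm_smul, Real.norm_eq_abs, abs_of_nonneg (by positivity)]
    field_simp
  have hpol : ⟪T x, y⟫ = (⟪T (x + y), x + y⟫ - ⟪T (x - y), x - y⟫) / 4 := by
    have h1 := hsymm y x
    simp only [map_add, map_sub, inner_add_left, inner_add_right,
      inner_sub_left, inner_sub_right]
    have h2 : ⟪T y, x⟫ = ⟪T x, y⟫ := by rw [h1, real_inner_comm]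
    linarith
  have hb : ⟪T x, y⟫ ≤ a * ‖x‖ ^ 2 := by
    rw [hpol]
    have h1 := (abs_le.1 (hq (x + y))).2
    have h2 := (abs_le.1 (hq (x - y))).1
    have h1' : ⟪T (x + y), x + y⟫ ≤ a * ‖x + y‖ ^ 2 := by
      rw [real_inner_comm]; exact h1
    have h2' : -(a * ‖x - y‖ ^ 2) ≤ ⟪T (x - y), x - y⟫ := by
      rw [real_inner_comm]; exact h2
    have hpar : ‖x + y‖ ^ 2 + ‖x - y‖ ^ 2 = 2 * (‖x‖ ^ 2 + ‖y‖ ^ 2) := by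
      have := parallelogram_law_with_norm ℝ x y; linarith
    rw [hyn] at hpar
    nlinarith [hpar]
  have hval : ⟪T x, y⟫ = ‖x‖ * ‖T x‖ := by
    rw [hy, real_inner_smul_right, real_inner_self_eq_norm_sq]
    field_simp
  rw [hval] at hb
  have : ‖x‖ * ‖T x‖ ≤ ‖x‖ * (a * ‖x‖) := by nlinarith
  exact le_of_mul_le_mul_left this hxn

private lemma integral_inner_apply' (H : ℝ → E →L[ℝ] E) (hc : Continuous H) (x y : E) :
    ⟪x, (∫ t in (0:ℝ)..1, H t) y⟫ = ∫ t in (0:ℝ)..1, ⟪x, H t y⟫ := by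
  rw [ContinuousLinearMap.intervalIntegral_apply (hc.intervalIntegrable 0 1) y]
  have := (innerSL ℝ x).intervalIntegral_comp_comm
    (f := fun t => H t y) (μ := MeasureTheory.volume) (a := 0) (b := 1)
    ((hc.clm_apply continuous_const).intervalIntegrable 0 1)
  simpa using this.symm

private lemma integral_inner_le' (H : ℝ → E →L[ℝ] E) (hc : Continuous H) (x : E) (c : ℝ)
    (hb : ∀ t, ⟪x, H t x⟫ ≤ c) : ⟪x, (∫ t in (0:ℝ)..1, H t) x⟫ ≤ c := by
  rw [integral_inner_apply' H hc]
  calc ∫ t in (0:ℝ)..1, ⟪x, H t x⟫ ≤ ∫ _t in (0:ℝ)..1, c := by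
        apply intervalIntegral.integral_mono_on zero_le_one
        · exact (continuous_const.inner (hc.clm_apply continuous_const)).intervalIntegrable 0 1
        · exact intervalIntegrable_const
        · exact fun t _ => hb t
    _ = c := by simp

private lemma integral_inner_ge' (H : ℝ → E →L[ℝ] E) (hc : Continuous H) (x : E) (c : ℝ)
    (hb : ∀ t, c ≤ ⟪x, H t x⟫) : c ≤ ⟪x, (∫ t in (0:ℝ)..1, H t) x⟫ := by
  rw [integral_inner_apply' H hc]
  calc c = ∫ _t in (0:ℝ)..1, c := by simp
    _ ≤ ∫ t in (0:ℝ)..1, ⟪x, H t x⟫ := by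
        apply intervalIntegral.integral_mono_on zero_le_one intervalIntegrable_const
        · exact (continuous_const.inner (hc.clm_apply continuous_const)).intervalIntegrable 0 1
        · exact fun t _ => hb t

private lemma integral_symm' (H : ℝ → E →L[ℝ] E) (hc : Continuous H)
    (hs : ∀ t (a b : E), ⟪H t a, b⟫ = ⟪a, H t b⟫) (x y : E) :
    ⟪(∫ t in (0:ℝ)..1, H t) x, y⟫ = ⟪x, (∫ t in (0:ℝ)..1, H t) y⟫ := by
  rw [real_inner_comm, integral_inner_apply' H hc, integral_inner_apply' H hc]
  apply intervalIntegral.integral_congr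
  intro t _
  show ⟪y, H t x⟫ = ⟪x, H t y⟫
  rw [real_inner_comm, hs]

end aux

set_option maxHeartbeats 1000000 in
theorem stmt_11 (p n r : ℕ) (hr : 1 ≤ r) (hrn : r < n) (μ L η c₀ M₁ ξ : ℝ)
    (hμ : 0 < μ) (hμL : μ ≤ L) (hc₀ : 0 ≤ c₀)
    (Fi : Fin n → EuclideanSpace ℝ (Fin p) → ℝ) (hFi : ∀ i, ContDiff ℝ 2 (Fi i))
    (hlow : ∀ i, ∀ x v : EuclideanSpace ℝ (Fin p),
      μ * ‖v‖ ^ 2 ≤ ⟪v, fderiv ℝ (gradient (Fi i)) x v⟫)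
    (hup : ∀ i, ∀ x v : EuclideanSpace ℝ (Fin p),
      ⟪v, fderiv ℝ (gradient (Fi i)) x v⟫ ≤ L * ‖v‖ ^ 2)
    (hHLip : ∀ i, ∀ x y : EuclideanSpace ℝ (Fin p),
      ‖fderiv ℝ (gradient (Fi i)) x - fderiv ℝ (gradient (Fi i)) y‖ ≤ c₀ * ‖x - y‖)
    (F : EuclideanSpace ℝ (Fin p) → ℝ) (hF : ∀ x, F x = (1 / n : ℝ) * ∑ i, Fi i x)
    (R : Finset (Fin n)) (hR : R.card = r)
    (hη : 0 < η) (hη2 : η ≤ 2 / (L + μ)) (hM₁ : 0 < M₁)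
    (w u v : EuclideanSpace ℝ (Fin p)) (huw : ‖u - w‖ ≤ M₁ * r / n)
    (B : EuclideanSpace ℝ (Fin p) →L[ℝ] EuclideanSpace ℝ (Fin p))
    (hBsymm : ∀ x y : EuclideanSpace ℝ (Fin p), ⟪B x, y⟫ = ⟪x, B y⟫)
    (hB : ‖B - ∫ x in (0:ℝ)..1, fderiv ℝ (gradient F) (w + x • (v - w))‖ ≤ ξ) :
    ‖(v - (η / ((n : ℝ) - r)) •
          ((n : ℝ) • (B (v - w) + gradient F w) - ∑ i ∈ R, gradient (Fi i) v))
        - (u - (η / ((n : ℝ) - r)) • ∑ i ∈ Rᶜ, gradient (Fi i) u)‖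
      ≤ (1 - η * μ + ((n : ℝ) * η / ((n : ℝ) - r)) * ξ + c₀ * M₁ * r * η / (2 * n)) * ‖v - u‖
        + (M₁ * r * η / ((n : ℝ) - r)) * ξ := by
  have hnpos : 0 < n := lt_of_le_of_lt (Nat.zero_le r) hrn
  have hn0 : (0:ℝ) < n := by exact_mod_cast hnpos
  have hnr : (0:ℝ) < (n:ℝ) - r := by
    have : (r:ℝ) < n := by exact_mod_cast hrn
    linarith
  have hξ0 : 0 ≤ ξ := le_trans (norm_nonneg _) hB
  have hLμ : 0 < L + μ := by linarith
  have hηLμ : η * (L + μ) ≤ 2 := by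
    rw [le_div_iff₀ hLμ] at hη2; linarith
  have hημ1 : η * μ ≤ 1 := by nlinarith
  -- abbreviations
  set G : Fin n → EuclideanSpace ℝ (Fin p) → EuclideanSpace ℝ (Fin p) :=
    fun i => gradient (Fi i) with hG
  set Hf : Fin n → ℝ → EuclideanSpace ℝ (Fin p) →L[ℝ] EuclideanSpace ℝ (Fin p) :=
    fun i t => fderiv ℝ (gradient (Fi i)) (u + t • (v - u)) with hHf
  set Hb : Fin n → EuclideanSpace ℝ (Fin p) →L[ℝ] EuclideanSpace ℝ (Fin p) :=
    fun i => ∫ t in (0:ℝ)..1, Hf i t with hHb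
  set HF : EuclideanSpace ℝ (Fin p) →L[ℝ] EuclideanSpace ℝ (Fin p) :=
    ∫ x in (0:ℝ)..1, fderiv ℝ (gradient F) (w + x • (v - w)) with hHF
  have hHfc : ∀ i, Continuous (Hf i) := fun i =>
    (hess_cont' (hFi i)).comp (continuous_const.add (continuous_id.smul continuous_const))
  -- smoothness of F
  have hFfun : F = fun x => (1 / n : ℝ) * ∑ i, Fi i x := funext hF
  have hFc : ContDiff ℝ 2 F := by
    rw [hFfun]
    exact contDiff_const.mul (ContDiff.sum fun i _ => hFi i)
  -- gradient of F
  have hgradF : ∀ x, (n:ℝ) • gradient F x = ∑ i, gradient (Fi i) x := by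
    intro x
    have hdi : ∀ i, DifferentiableAt ℝ (Fi i) x := fun i =>
      ((hFi i).differentiable (by norm_num)).differentiableAt
    have h1 : fderiv ℝ F x = (1 / n : ℝ) • ∑ i, fderiv ℝ (Fi i) x := by
      rw [hFfun, fderiv_const_mul (DifferentiableAt.fun_sum fun i _ => hdi i),
        fderiv_fun_sum fun i _ => hdi i]
    have h2 : gradient F x
        = (toDual ℝ (EuclideanSpace ℝ (Fin p))).symm (fderiv ℝ F x) := rfl
    rw [h2, h1, map_smul, map_sum, smul_smul]
    have : (n:ℝ) * (1 / n : ℝ) = 1 := by field_simp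
    rw [this, one_smul]
    rfl
  -- FTC
  have ftcF : gradient F v - gradient F w = HF (v - w) := grad_ftc' hFc w v
  have ftci : ∀ i, G i v - G i u = Hb i (v - u) := fun i => grad_ftc' (hFi i) u v
  -- the averaged Hessian S
  set S : EuclideanSpace ℝ (Fin p) →L[ℝ] EuclideanSpace ℝ (Fin p) :=
    ((n:ℝ) - r)⁻¹ • ∑ i ∈ Rᶜ, Hb i with hS
  have hcard : ((Rᶜ).card : ℝ) = (n:ℝ) - r := by
    rw [Finset.card_compl, hR, Fintype.card_fin, Nat.cast_sub hrn.le]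
  have hSapply : ∀ x, S x = ((n:ℝ) - r)⁻¹ • ∑ i ∈ Rᶜ, Hb i x := by
    intro x
    rw [hS, ContinuousLinearMap.smul_apply, ContinuousLinearMap.sum_apply]
  have hSinner : ∀ x y : EuclideanSpace ℝ (Fin p),
      ⟪x, S y⟫ = ((n:ℝ) - r)⁻¹ * ∑ i ∈ Rᶜ, ⟪x, Hb i y⟫ := by
    intro x y
    rw [hSapply, real_inner_smul_right, inner_sum]
  have hSlow : ∀ x : EuclideanSpace ℝ (Fin p), μ * ‖x‖ ^ 2 ≤ ⟪x, S x⟫ := by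
    intro x
    rw [hSinner]
    have h1 : ∀ i ∈ Rᶜ, μ * ‖x‖ ^ 2 ≤ ⟪x, Hb i x⟫ := fun i _ =>
      integral_inner_ge' (Hf i) (hHfc i) x _ (fun t => hlow i _ x)
    have h2 : ((Rᶜ).card : ℝ) * (μ * ‖x‖ ^ 2) ≤ ∑ i ∈ Rᶜ, ⟪x, Hb i x⟫ := by
      calc ((Rᶜ).card : ℝ) * (μ * ‖x‖ ^ 2) = ∑ _i ∈ Rᶜ, μ * ‖x‖ ^ 2 := by
            rw [Finset.sum_const, nsmul_eq_mul]
        _ ≤ _ := Finset.sum_le_sum h1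
    rw [hcard] at h2
    calc μ * ‖x‖ ^ 2 = ((n:ℝ) - r)⁻¹ * (((n:ℝ) - r) * (μ * ‖x‖ ^ 2)) := by
          field_simp
      _ ≤ _ := by
          apply mul_le_mul_of_nonneg_left h2 (by positivity)
  have hSup : ∀ x : EuclideanSpace ℝ (Fin p), ⟪x, S x⟫ ≤ L * ‖x‖ ^ 2 := by
    intro x
    rw [hSinner]
    have h1 : ∀ i ∈ Rᶜ, ⟪x, Hb i x⟫ ≤ L * ‖x‖ ^ 2 := fun i _ =>
      integral_inner_le' (Hf i) (hHfc i) x _ (fun t => hup i _ x)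
    have h2 : ∑ i ∈ Rᶜ, ⟪x, Hb i x⟫ ≤ ((Rᶜ).card : ℝ) * (L * ‖x‖ ^ 2) := by
      calc ∑ i ∈ Rᶜ, ⟪x, Hb i x⟫ ≤ ∑ _i ∈ Rᶜ, L * ‖x‖ ^ 2 := Finset.sum_le_sum h1
        _ = ((Rᶜ).card : ℝ) * (L * ‖x‖ ^ 2) := by rw [Finset.sum_const, nsmul_eq_mul]
    rw [hcard] at h2
    calc ((n:ℝ) - r)⁻¹ * ∑ i ∈ Rᶜ, ⟪x, Hb i x⟫
        ≤ ((n:ℝ) - r)⁻¹ * (((n:ℝ) - r) * (L * ‖x‖ ^ 2)) :=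
          mul_le_mul_of_nonneg_left h2 (by positivity)
      _ = L * ‖x‖ ^ 2 := by field_simp
  have hSsymm : ∀ x y : EuclideanSpace ℝ (Fin p), ⟪S x, y⟫ = ⟪x, S y⟫ := by
    intro x y
    rw [real_inner_comm, hSinner, hSinner]
    congr 1
    apply Finset.sum_congr rfl
    intro i _
    rw [← integral_symm' (Hf i) (hHfc i) (fun t a b => hess_symm' (hFi i) _ a b) x y,
      real_inner_comm]
  -- the contraction operator T
  set T : EuclideanSpace ℝ (Fin p) →L[ℝ] EuclideanSpace ℝ (Fin p) :=
    ContinuousLinearMap.id ℝ _ - η • S with hT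
  have hTapply : ∀ x, T x = x - η • S x := by
    intro x
    rw [hT, ContinuousLinearMap.sub_apply, ContinuousLinearMap.smul_apply,
      ContinuousLinearMap.id_apply]
  have hTinner : ∀ x : EuclideanSpace ℝ (Fin p), ⟪x, T x⟫ = ‖x‖ ^ 2 - η * ⟪x, S x⟫ := by
    intro x
    rw [hTapply, inner_sub_right, real_inner_smul_right, real_inner_self_eq_norm_sq]
  have hTq : ∀ x : EuclideanSpace ℝ (Fin p), |⟪x, T x⟫| ≤ (1 - η * μ) * ‖x‖ ^ 2 := by
    intro x
    rw [abs_le, hTinner]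
    have h1 := mul_le_mul_of_nonneg_left (hSup x) hη.le
    have h2 := mul_le_mul_of_nonneg_left (hSlow x) hη.le
    have h3 : 0 ≤ (2 - η * (L + μ)) * ‖x‖ ^ 2 :=
      mul_nonneg (by linarith) (sq_nonneg _)
    constructor
    · nlinarith [h1, h3]
    · nlinarith [h2]
  have hTsymm : ∀ x y : EuclideanSpace ℝ (Fin p), ⟪T x, y⟫ = ⟪x, T y⟫ := by
    intro x y
    rw [hTapply, hTapply, inner_sub_left, inner_sub_right, inner_smul_left, inner_smul_right]
    rw [hSsymm]
    norm_num
  have hTbound : ‖T (v - u)‖ ≤ (1 - η * μ) * ‖v - u‖ :=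
    symm_contraction' T (1 - η * μ) hTsymm hTq (v - u)
  -- algebraic identity
  have e2 : ∑ i ∈ Rᶜ, G i v = (∑ i ∈ Rᶜ, G i u) + ((n:ℝ) - r) • S (v - u) := by
    have h1 : ∑ i ∈ Rᶜ, G i v - ∑ i ∈ Rᶜ, G i u = ∑ i ∈ Rᶜ, Hb i (v - u) := by
      rw [← Finset.sum_sub_distrib]
      exact Finset.sum_congr rfl fun i _ => ftci i
    have h2 : ((n:ℝ) - r) • S (v - u) = ∑ i ∈ Rᶜ, Hb i (v - u) := by
      rw [hSapply, smul_smul]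
      rw [mul_inv_cancel₀ (ne_of_gt hnr), one_smul]
    rw [h2, ← h1]
    abel
  have e1 : (n:ℝ) • (B (v - w) + gradient F w) - ∑ i ∈ R, gradient (Fi i) v
      = (n:ℝ) • ((B - HF) (v - w)) + ∑ i ∈ Rᶜ, G i v := by
    have key1 : (∑ i ∈ R, gradient (Fi i) v) + ∑ i ∈ Rᶜ, G i v = (n:ℝ) • gradient F v := by
      rw [hgradF v]
      exact Finset.sum_add_sum_compl R _
    have key2 : gradient F v = gradient F w + HF (v - w) := by
      rw [← ftcF]; abel
    have key3 : (B - HF) (v - w) = B (v - w) - HF (v - w) :=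
      ContinuousLinearMap.sub_apply B HF (v - w)
    have key4 : ∑ i ∈ R, gradient (Fi i) v
        = (n:ℝ) • gradient F w + (n:ℝ) • HF (v - w) - ∑ i ∈ Rᶜ, G i v := by
      rw [← smul_add, ← key2, ← key1]; abel
    rw [key3, key4, smul_add, smul_sub]
    abel
  have hX : (v - (η / ((n : ℝ) - r)) •
          ((n : ℝ) • (B (v - w) + gradient F w) - ∑ i ∈ R, gradient (Fi i) v))
        - (u - (η / ((n : ℝ) - r)) • ∑ i ∈ Rᶜ, gradient (Fi i) u)
      = T (v - u) - ((n:ℝ) * η / ((n:ℝ) - r)) • ((B - HF) (v - w)) := by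
    rw [e1, e2, hTapply]
    have hGu : ∑ i ∈ Rᶜ, gradient (Fi i) u = ∑ i ∈ Rᶜ, G i u := rfl
    rw [hGu]
    match_scalars <;>
      · field_simp
        try ring
        try exact Or.inl trivial
  rw [hX]
  -- norm estimates
  have hvw : ‖v - w‖ ≤ ‖v - u‖ + M₁ * r / n := by
    have h1 : ‖v - w‖ ≤ ‖v - u‖ + ‖u - w‖ := by
      have := norm_sub_le_norm_sub_add_norm_sub v u w
      exact this
    linarith
  have hEop : ‖(B - HF) (v - w)‖ ≤ ξ * (‖v - u‖ + M₁ * r / n) := by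
    calc ‖(B - HF) (v - w)‖ ≤ ‖B - HF‖ * ‖v - w‖ := (B - HF).le_opNorm _
      _ ≤ ξ * (‖v - u‖ + M₁ * r / n) := by
          apply mul_le_mul hB hvw (norm_nonneg _) hξ0
  have hfinal : ‖T (v - u) - ((n:ℝ) * η / ((n:ℝ) - r)) • ((B - HF) (v - w))‖
      ≤ (1 - η * μ) * ‖v - u‖
        + ((n:ℝ) * η / ((n:ℝ) - r)) * (ξ * (‖v - u‖ + M₁ * r / n)) := by
    calc ‖T (v - u) - ((n:ℝ) * η / ((n:ℝ) - r)) • ((B - HF) (v - w))‖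
        ≤ ‖T (v - u)‖ + ‖((n:ℝ) * η / ((n:ℝ) - r)) • ((B - HF) (v - w))‖ :=
          norm_sub_le _ _
      _ ≤ (1 - η * μ) * ‖v - u‖
          + ((n:ℝ) * η / ((n:ℝ) - r)) * (ξ * (‖v - u‖ + M₁ * r / n)) := by
          apply add_le_add hTbound
          rw [norm_smul, Real.norm_eq_abs, abs_of_nonneg (by positivity)]
          exact mul_le_mul_of_nonneg_left hEop (by positivity)
  refine hfinal.trans ?_
  have hc₀term : 0 ≤ c₀ * M₁ * r * η / (2 * n) * ‖v - u‖ := by positivity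
  have heq : ((n:ℝ) * η / ((n:ℝ) - r)) * (ξ * (M₁ * r / n))
      = (M₁ * r * η / ((n:ℝ) - r)) * ξ := by
    field_simp
  nlinarith [norm_nonneg (v - u), hξ0, mul_nonneg hξ0 (norm_nonneg (v - u))]
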